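/- arXiv:0711.0552 — 2 statements merged into one kernel-verified Lean document; each statement's English description precedes it below -/
import Mathlib

section
/- In the shifted Yangian Y_π(gl_n), for each index i the generating series satisfy [a_i(u), c_j(v)] = 0 and [b_i(u), c_j(v)] = 0 whenever i ≠ j, where a_i(u) = d_1(u)d_2(u-1)⋯d_i(u-i+1), b_i(u) = a_i(u)e_i(u-i+1), and c_i(u) = f_i(u-i+1)a_i(u). -/
open scoped Classical
open PowerSeries

noncomputable section

/-- The shifted Yangian `Y_π(gl_n)` presentation: a ring `A` together with elements
`d i r`, `d' i r`, `e i r`, `f i r` satisfying the Brundan–Kleshchev defining relations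
for the pyramid `π = (p 1 ≤ ⋯ ≤ p n)`.  (`d i 0 = 1`, `e i r = 0` below the admissible
range, `f i 0 = 0`.) -/
structure ShiftedYangian (A : Type) [Ring A] (n : ℕ) (p : ℕ → ℕ) where
  d : ℕ → ℕ → A
  d' : ℕ → ℕ → A
  e : ℕ → ℕ → A
  f : ℕ → ℕ → A
  d_zero : ∀ i, d i 0 = 1
  d'_zero : ∀ i, d' i 0 = 1
  e_zero : ∀ i r, r < p (i+1) - p i + 1 → e i r = 0
  f_zero : ∀ i, f i 0 = 0
  d_inv : ∀ i r, 1 ≤ i → i ≤ n →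
    (∑ t ∈ Finset.range (r+1), d i t * d' i (r - t)) = if r = 0 then 1 else 0
  rel_dd : ∀ i j r s, ⁅d i r, d j s⁆ = 0
  rel_ef : ∀ i j r s, 1 ≤ i → i ≤ n - 1 → 1 ≤ j → j ≤ n - 1 →
    p (i+1) - p i + 1 ≤ r → 1 ≤ s →
    ⁅e i r, f j s⁆ =
      if i = j then -(∑ t ∈ Finset.range (r+s), d' i t * d (i+1) (r+s-1-t)) else 0
  rel_de : ∀ i j r s, 1 ≤ i → i ≤ n → 1 ≤ j → j ≤ n - 1 → 1 ≤ r →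
    p (j+1) - p j + 1 ≤ s →
    ⁅d i r, e j s⁆ =
      ((if i = j then (1:ℤ) else 0) - (if i = j + 1 then 1 else 0)) •
        ∑ t ∈ Finset.range r, d i t * e j (r+s-1-t)
  rel_df : ∀ i j r s, 1 ≤ i → i ≤ n → 1 ≤ j → j ≤ n - 1 → 1 ≤ r → 1 ≤ s →
    ⁅d i r, f j s⁆ =
      ((if i = j + 1 then (1:ℤ) else 0) - (if i = j then 1 else 0)) •
        ∑ t ∈ Finset.range r, f j (r+s-1-t) * d i t
  rel_ee : ∀ i r s, 1 ≤ i → i ≤ n - 1 →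
    p (i+1) - p i + 1 ≤ r → p (i+1) - p i + 1 ≤ s →
    ⁅e i r, e i (s+1)⁆ - ⁅e i (r+1), e i s⁆ = e i r * e i s + e i s * e i r
  rel_ff : ∀ i r s, 1 ≤ i → i ≤ n - 1 → 1 ≤ r → 1 ≤ s →
    ⁅f i (r+1), f i s⁆ - ⁅f i r, f i (s+1)⁆ = f i r * f i s + f i s * f i r
  rel_ee1 : ∀ i r s, 1 ≤ i → i + 1 ≤ n - 1 →
    p (i+1) - p i + 1 ≤ r → p (i+2) - p (i+1) + 1 ≤ s →
    ⁅e i r, e (i+1) (s+1)⁆ - ⁅e i (r+1), e (i+1) s⁆ = -(e i r * e (i+1) s)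
  rel_ff1 : ∀ i r s, 1 ≤ i → i + 1 ≤ n - 1 → 1 ≤ r → 1 ≤ s →
    ⁅f i (r+1), f (i+1) s⁆ - ⁅f i r, f (i+1) (s+1)⁆ = -(f (i+1) s * f i r)
  rel_ee2 : ∀ i j r s, 1 ≤ i → i ≤ n - 1 → 1 ≤ j → j ≤ n - 1 →
    (i + 1 < j ∨ j + 1 < i) →
    p (i+1) - p i + 1 ≤ r → p (j+1) - p j + 1 ≤ s → ⁅e i r, e j s⁆ = 0
  rel_ff2 : ∀ i j r s, 1 ≤ i → i ≤ n - 1 → 1 ≤ j → j ≤ n - 1 →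
    (i + 1 < j ∨ j + 1 < i) → 1 ≤ r → 1 ≤ s → ⁅f i r, f j s⁆ = 0
  serre_e : ∀ i j r s t, 1 ≤ i → i ≤ n - 1 → 1 ≤ j → j ≤ n - 1 →
    (i = j + 1 ∨ j = i + 1) →
    p (i+1) - p i + 1 ≤ r → p (i+1) - p i + 1 ≤ s → p (j+1) - p j + 1 ≤ t →
    ⁅e i r, ⁅e i s, e j t⁆⁆ + ⁅e i s, ⁅e i r, e j t⁆⁆ = 0
  serre_f : ∀ i j r s t, 1 ≤ i → i ≤ n - 1 → 1 ≤ j → j ≤ n - 1 →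
    (i = j + 1 ∨ j = i + 1) → 1 ≤ r → 1 ≤ s → 1 ≤ t →
    ⁅f i r, ⁅f i s, f j t⁆⁆ + ⁅f i s, ⁅f i r, f j t⁆⁆ = 0

variable {A : Type} [Ring A]

/-- The re-expansion of `g(u - c)` as a formal series in `u⁻¹`, where `g` is regarded as a
series in `u⁻¹` (the coefficient of `u⁻ʲ` in `(u-c)⁻ʳ` is `C(j-1, r-1) cʲ⁻ʳ`). -/
def shiftSeries (c : ℤ) (g : PowerSeries A) : PowerSeries A :=
  PowerSeries.mk fun j => if j = 0 then PowerSeries.coeff (R := A) 0 g else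
    ∑ r ∈ Finset.Icc 1 j,
      ((j-1).choose (r-1) : A) * (c : A)^(j-r) * PowerSeries.coeff (R := A) r g

/-- Coefficient function indexed by `ℤ` (zero in negative degrees). -/
def zcoeff (j : ℤ) (g : PowerSeries A) : A :=
  if h : 0 ≤ j then PowerSeries.coeff (R := A) j.toNat g else 0

namespace ShiftedYangian

variable {n : ℕ} {p : ℕ → ℕ} (Y : ShiftedYangian A n p)

/-- The series `d_i(u) = 1 + Σ_{r≥1} d_i^{(r)} u⁻ʳ` (as a series in `u⁻¹`). -/
def dS (i : ℕ) : PowerSeries A := PowerSeries.mk (Y.d i)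

/-- The series `e_i(u)`. -/
def eS (i : ℕ) : PowerSeries A := PowerSeries.mk (Y.e i)

/-- The series `f_i(u)`. -/
def fS (i : ℕ) : PowerSeries A := PowerSeries.mk (Y.f i)

/-- `a_i(u) = d_1(u) d_2(u-1) ⋯ d_i(u-i+1)`. -/
def aS (i : ℕ) : PowerSeries A :=
  ((List.range i).map fun k : ℕ => shiftSeries (k : ℤ) (Y.dS (k+1))).prod

/-- `b_i(u) = a_i(u) e_i(u-i+1)`. -/
def bS (i : ℕ) : PowerSeries A := Y.aS i * shiftSeries ((i : ℤ) - 1) (Y.eS i)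

/-- `c_i(u) = f_i(u-i+1) a_i(u)`. -/
def cS (i : ℕ) : PowerSeries A := shiftSeries ((i : ℤ) - 1) (Y.fS i) * Y.aS i

end ShiftedYangian

/-- `p_1 + ⋯ + p_i`, the degree of the polynomial `A_i(u)`. -/
def degP (p : ℕ → ℕ) (i : ℕ) : ℕ := ∑ k ∈ Finset.range i, p (k+1)

/-- The series `u^{-(p_1+⋯+p_i)} · u^{p_1}(u-1)^{p_2}⋯(u-i+1)^{p_i}`, i.e.
`∏_{k=0}^{i-1} (1 - k u⁻¹)^{p_{k+1}}` as a series in `u⁻¹`. -/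
def polyPre (p : ℕ → ℕ) (i : ℕ) : PowerSeries A :=
  ((List.range i).map fun k : ℕ =>
    ((1 : PowerSeries A) - PowerSeries.C (R := A) (k : A) * PowerSeries.X) ^ (p (k+1))).prod

/-- `∏_{k=0}^{i-1} (1 - (k+1) u⁻¹)^{p_{k+1}}`, the prefactor of `A_i(u-1)` divided by
`u^{p_1+⋯+p_i}`. -/
def polyPreSh (p : ℕ → ℕ) (i : ℕ) : PowerSeries A :=
  ((List.range i).map fun k : ℕ =>
    ((1 : PowerSeries A) - PowerSeries.C (R := A) ((k : A) + 1) * PowerSeries.X) ^ (p (k+1))).prod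

/-- The prefactor of `B_i(u)` divided by `u^{p_1+⋯+p_{i-1}+p_{i+1}}`:
`∏_{k=0}^{i-2} (1 - k u⁻¹)^{p_{k+1}} · (1 - (i-1) u⁻¹)^{p_{i+1}}`. -/
def polyPreB (p : ℕ → ℕ) (i : ℕ) : PowerSeries A :=
  (((List.range (i-1)).map fun k : ℕ =>
    ((1 : PowerSeries A) - PowerSeries.C (R := A) (k : A) * PowerSeries.X) ^ (p (k+1))).prod) *
    ((1 : PowerSeries A) - PowerSeries.C (R := A) ((i : A) - 1) * PowerSeries.X) ^ (p (i+1))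

namespace ShiftedYangian

variable {n : ℕ} {p : ℕ → ℕ} (Y : ShiftedYangian A n p)

/-- `u^{-(p_1+⋯+p_i)} A_i(u)`. -/
def alS (i : ℕ) : PowerSeries A := polyPre p i * Y.aS i

/-- `u^{-(p_1+⋯+p_{i-1}+p_{i+1})} B_i(u)`. -/
def beS (i : ℕ) : PowerSeries A := polyPreB p i * Y.bS i

/-- `u^{-(p_1+⋯+p_i)} C_i(u)`. -/
def gaS (i : ℕ) : PowerSeries A := polyPre p i * Y.cS i

end ShiftedYangian

/-! The relations between `d_k` and `f_j` say that `d_k(u)` and `f_j(v)` satisfy an exchange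
relation `(u - v - a) d_k(u) f_j(v) = (u - v - b) f_j(v) d_k(u)` away from the low powers of `v⁻¹`,
with `(a, b) = (0, 1)` for `k = j` and `(0, -1)` for `k = j + 1`; with `e_j` in place of `f_j` the
parameters are `(1, 0)` and `(-1, 0)`. Substituting `u ↦ u - c` adds `c` to both parameters, and if
`X` has parameters `(a, b)` and `Z` has `(c, a)` then `X Z` has `(c, b)`. So the block
`W(u) = d_j(u - q) d_{j+1}(u - q - 1)` of `a_i(u)`, for `i > j = q + 1`, has equal parameters
`(a, a)`; then `[W_{m+1}, g_s] = [W_m, g_{s+1}] + a [W_m, g_s]` and `W_0 = 1` force every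
coefficient of `W` to commute with `f_j` (resp. `e_j`). The other factors of `a_i` commute with
`f_j` outright. Hence `a_i` commutes with `f_j`, and with `a_j` since the `d`'s commute, so with
`c_j = f_j(u-j+1) a_j(u)`; likewise `e_i` commutes with `f_j` and `a_j`, which gives the claim for
`b_i = a_i(u) e_i(u-i+1)`. -/

open Finset

@[simp] theorem constantCoeff_shiftSeries (c : ℤ) (X : PowerSeries A) :
    constantCoeff (shiftSeries c X) = constantCoeff X := by
  rw [← coeff_zero_eq_constantCoeff_apply, ← coeff_zero_eq_constantCoeff_apply, shiftSeries,
    coeff_mk, if_pos rfl]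

theorem coeff_succ_shiftSeries (c : ℤ) (X : PowerSeries A) (m : ℕ) :
    coeff (m + 1) (shiftSeries c X) =
      ∑ ij ∈ antidiagonal m, m.choose ij.1 • c ^ ij.2 • coeff (ij.1 + 1) X := by
  rw [shiftSeries, coeff_mk, if_neg m.succ_ne_zero, Nat.sum_antidiagonal_eq_sum_range_succ_mk,
    ← Ico_add_one_right_eq_Icc, sum_Ico_eq_sum_range]
  refine sum_congr rfl fun k hk => ?_
  have hk : k ≤ m := Nat.lt_succ_iff.mp (mem_range.mp hk)
  rw [show m + 1 - (1 + k) = m - k by omega, add_comm 1 k]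
  simp only [Nat.add_sub_cancel, nsmul_eq_mul, zsmul_eq_mul, Int.cast_pow, mul_assoc]

theorem coeff_succ_shiftSeries_of_constantCoeff_eq_zero (c : ℤ) {X : PowerSeries A}
    (hX : constantCoeff X = 0) (m : ℕ) :
    coeff (m + 1) (shiftSeries c X) =
      c • coeff m (shiftSeries c X) + coeff m (shiftSeries c (mk fun t => coeff (t + 1) X)) := by
  cases m with
  | zero => simp [coeff_succ_shiftSeries, hX]
  | succ k =>
    rw [coeff_succ_shiftSeries, sum_antidiagonal_choose_succ_nsmul
      (fun i j => c ^ j • coeff (i + 1) X), coeff_succ_shiftSeries, coeff_succ_shiftSeries,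
      smul_sum]
    congr 1
    · refine sum_congr rfl fun ij _ => ?_
      rw [pow_succ', mul_smul, smul_comm c (k.choose ij.1)]
    · refine sum_congr rfl fun ij hij => ?_
      rw [coeff_mk, Nat.choose_symm_of_eq_add (mem_antidiagonal.mp hij).symm]

theorem map_coeff_shiftSeries {B : Type} [Ring B] (φ : A →+ B) (c : ℤ) (X : PowerSeries A)
    (m : ℕ) :
    φ (coeff m (shiftSeries c X)) = coeff m (shiftSeries c (mk fun t => φ (coeff t X))) := by
  cases m with
  | zero => simp
  | succ k => simp only [coeff_succ_shiftSeries, coeff_mk, map_sum, map_nsmul, map_zsmul]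

section ExchangeRelations

attribute [local instance] LieRing.ofAssociativeRing

theorem Ring.mul_lie (x y z : A) : ⁅x * y, z⁆ = x * ⁅y, z⁆ + ⁅x, z⁆ * y := by
  simp only [Ring.lie_def]; noncomm_ring

theorem lie_coeff_succ_mul {X Z : PowerSeries A} (hX : constantCoeff X = 1)
    (hZ : constantCoeff Z = 1) (y : A) (m : ℕ) :
    ⁅coeff (m + 1) (X * Z), y⁆ = ∑ ij ∈ antidiagonal m,
      (coeff ij.1 X * ⁅coeff (ij.2 + 1) Z, y⁆ + ⁅coeff (ij.1 + 1) X, y⁆ * coeff ij.2 Z) := by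
  rw [coeff_mul, sum_lie]
  simp only [Ring.mul_lie, sum_add_distrib]
  rw [Nat.sum_antidiagonal_succ',
    Nat.sum_antidiagonal_succ (f := fun ij => ⁅coeff ij.1 X, y⁆ * coeff ij.2 Z)]
  simp [hX, hZ, (Commute.one_left y).lie_eq]

def lieRight (y : A) : A →+ A := AddMonoidHom.mulRight y - AddMonoidHom.mulLeft y

@[simp] theorem lieRight_apply (x y : A) : lieRight y x = ⁅x, y⁆ := (Ring.lie_def x y).symm

/-- Coefficient form of the exchange relation `(u - v - a) X(u) g(v) = (u - v - b) g(v) X(u)`,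
read off at `v⁻ˢ` for `s ≥ s₀` only. -/
def ExchangeRel (g : ℕ → A) (s₀ : ℕ) (a b : ℤ) (X : PowerSeries A) : Prop :=
  ∀ m s, s₀ ≤ s → ⁅coeff (m + 1) X, g s⁆ =
    ⁅coeff m X, g (s + 1)⁆ + a • (coeff m X * g s) - b • (g s * coeff m X)

namespace ExchangeRel

variable {g : ℕ → A} {s₀ : ℕ} {a b c : ℤ} {X Z : PowerSeries A}

theorem shiftSeries (h : ExchangeRel g s₀ a b X) (hX : constantCoeff X = 1) (c : ℤ) :
    ExchangeRel g s₀ (a + c) (b + c) (_root_.shiftSeries c X) := by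
  intro m s hs
  set S := _root_.shiftSeries c X
  set W := mk fun t => ⁅coeff t X, g s⁆
  let ψ : A →+ A := lieRight (g (s + 1)) + a • AddMonoidHom.mulRight (g s) -
    b • AddMonoidHom.mulLeft (g s)
  have hS : ∀ n, ⁅coeff n S, g s⁆ = coeff n (_root_.shiftSeries c W) :=
    map_coeff_shiftSeries (lieRight (g s)) c X
  have hW : (mk fun t => coeff (t + 1) W) = mk fun t => ψ (coeff t X) := by
    ext t
    simp only [W, coeff_mk]
    exact h t s hs
  calc ⁅coeff (m + 1) S, g s⁆
      = c • ⁅coeff m S, g s⁆ + ψ (coeff m S) := by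
        rw [hS, coeff_succ_shiftSeries_of_constantCoeff_eq_zero c
          (by simp [W, hX, (Commute.one_left (g s)).lie_eq]), hW, map_coeff_shiftSeries ψ, hS]
    _ = _ := by
        simp only [ψ, lieRight_apply, AddMonoidHom.sub_apply, AddMonoidHom.add_apply,
          AddMonoidHom.smul_apply, AddMonoidHom.coe_mulLeft, AddMonoidHom.coe_mulRight,
          Ring.lie_def, add_smul, smul_sub]
        abel

theorem mul (hX : ExchangeRel g s₀ a b X) (hZ : ExchangeRel g s₀ c a Z)
    (hX0 : constantCoeff X = 1) (hZ0 : constantCoeff Z = 1) : ExchangeRel g s₀ c b (X * Z) := by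
  intro m s hs
  rw [lie_coeff_succ_mul hX0 hZ0, coeff_mul, sum_lie, sum_mul, mul_sum, smul_sum, smul_sum,
    ← sum_add_distrib, ← sum_sub_distrib]
  refine sum_congr rfl fun ij _ => ?_
  rw [hX _ s hs, hZ _ s hs]
  simp only [Ring.lie_def, mul_add, mul_sub, add_mul, sub_mul, mul_smul_comm, smul_mul_assoc,
    mul_assoc]
  abel

theorem lie_coeff_eq_zero (h : ExchangeRel g s₀ a a X) (hX : constantCoeff X = 1) (m s : ℕ)
    (hs : s₀ ≤ s) : ⁅coeff m X, g s⁆ = 0 := by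
  induction m generalizing s with
  | zero => simp [hX, Ring.lie_def]
  | succ m ih =>
    rw [h m s hs, ih (s + 1) (by omega), zero_add, ← smul_sub, ← Ring.lie_def, ih s hs,
      smul_zero]

end ExchangeRel

section Generators

variable {x g : ℕ → A} {s₀ : ℕ} {ε : ℤ}

theorem exchangeRel_mk_of_lie_eq_smul_sum_left (hx0 : x 0 = 1)
    (h : ∀ r s, 1 ≤ r → s₀ ≤ s → ⁅x r, g s⁆ = ε • ∑ t ∈ range r, x t * g (r + s - 1 - t)) :
    ExchangeRel g s₀ ε 0 (mk x) := by
  have h' : ∀ r s, s₀ ≤ s → ⁅x r, g s⁆ = ε • ∑ t ∈ range r, x t * g (r + s - 1 - t)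
    | 0, s, _ => by simp [hx0, (Commute.one_left (g s)).lie_eq]
    | r + 1, s, hs => h (r + 1) s r.succ_pos hs
  intro m s hs
  have hsum : ∑ t ∈ range m, x t * g (m + 1 + s - 1 - t) =
      ∑ t ∈ range m, x t * g (m + (s + 1) - 1 - t) :=
    sum_congr rfl fun t _ => by rw [show m + 1 + s - 1 - t = m + (s + 1) - 1 - t by omega]
  simp only [coeff_mk]
  rw [h' _ _ hs, h' _ _ (by omega), sum_range_succ, hsum, show m + 1 + s - 1 - m = s by omega]
  module

theorem exchangeRel_mk_of_lie_eq_smul_sum_right (hx0 : x 0 = 1)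
    (h : ∀ r s, 1 ≤ r → s₀ ≤ s → ⁅x r, g s⁆ = (-ε) • ∑ t ∈ range r, g (r + s - 1 - t) * x t) :
    ExchangeRel g s₀ 0 ε (mk x) := by
  have h' : ∀ r s, s₀ ≤ s → ⁅x r, g s⁆ = (-ε) • ∑ t ∈ range r, g (r + s - 1 - t) * x t
    | 0, s, _ => by simp [hx0, (Commute.one_left (g s)).lie_eq]
    | r + 1, s, hs => h (r + 1) s r.succ_pos hs
  intro m s hs
  have hsum : ∑ t ∈ range m, g (m + 1 + s - 1 - t) * x t =
      ∑ t ∈ range m, g (m + (s + 1) - 1 - t) * x t :=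
    sum_congr rfl fun t _ => by rw [show m + 1 + s - 1 - t = m + (s + 1) - 1 - t by omega]
  simp only [coeff_mk]
  rw [h' _ _ hs, h' _ _ (by omega), sum_range_succ, hsum, show m + 1 + s - 1 - m = s by omega]
  module

end Generators

/-- The parameters of `Z` are those for which the shifted product satisfies an exchange relation
with `a = b`. -/
theorem lie_coeff_shiftSeries_mul_shiftSeries_eq_zero {g : ℕ → A} {s₀ : ℕ} {a b : ℤ}
    {X Z : PowerSeries A} (hX : ExchangeRel g s₀ a b X) (hZ : ExchangeRel g s₀ (b - 1) (a - 1) Z)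
    (hX0 : constantCoeff X = 1) (hZ0 : constantCoeff Z = 1) (c : ℤ) (r s : ℕ) (hs : s₀ ≤ s) :
    ⁅coeff r (shiftSeries c X * shiftSeries (c + 1) Z), g s⁆ = 0 := by
  have hZ' : ExchangeRel g s₀ (b + c) (a + c) (shiftSeries (c + 1) Z) := by
    convert hZ.shiftSeries hZ0 (c + 1) using 1 <;> ring
  refine ((hX.shiftSeries hX0 c).mul hZ' ?_ ?_).lie_coeff_eq_zero ?_ r s hs
  all_goals simp [hX0, hZ0]

end ExchangeRelations

section Commute

variable {z : A} {X Z : PowerSeries A}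

theorem commute_coeff_shiftSeries (h : ∀ t, Commute z (coeff t X)) (c : ℤ) (m : ℕ) :
    Commute z (coeff m (shiftSeries c X)) := by
  cases m with
  | zero =>
    rw [coeff_zero_eq_constantCoeff_apply, constantCoeff_shiftSeries,
      ← coeff_zero_eq_constantCoeff_apply]
    exact h 0
  | succ m =>
    rw [coeff_succ_shiftSeries]
    exact Commute.sum_right _ _ _ fun ij _ => ((h _).smul_right _).smul_right _

theorem commute_coeff_mul (hX : ∀ t, Commute z (coeff t X)) (hZ : ∀ t, Commute z (coeff t Z))
    (m : ℕ) : Commute z (coeff m (X * Z)) := by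
  rw [coeff_mul]
  exact Commute.sum_right _ _ _ fun ij _ => (hX _).mul_right (hZ _)

end Commute

namespace ShiftedYangian

variable {n : ℕ} {p : ℕ → ℕ} (Y : ShiftedYangian A n p)

theorem constantCoeff_dS (i : ℕ) : constantCoeff (Y.dS i) = 1 := by
  rw [← coeff_zero_eq_constantCoeff_apply, dS, coeff_mk, Y.d_zero]

@[simp] theorem coeff_dS (i t : ℕ) : coeff t (Y.dS i) = Y.d i t := coeff_mk t (Y.d i)

@[simp] theorem coeff_eS (i t : ℕ) : coeff t (Y.eS i) = Y.e i t := coeff_mk t (Y.e i)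

@[simp] theorem coeff_fS (i t : ℕ) : coeff t (Y.fS i) = Y.f i t := coeff_mk t (Y.f i)

theorem aS_succ (i : ℕ) : Y.aS (i + 1) = Y.aS i * shiftSeries i (Y.dS (i + 1)) := by
  simp [aS, List.range_succ]

section Exchange

variable {j : ℕ} (hj1 : 1 ≤ j) (hj2 : j ≤ n - 1)
include hj1 hj2

theorem exchangeRel_dS_f : ExchangeRel (Y.f j) 1 0 1 (Y.dS j) :=
  exchangeRel_mk_of_lie_eq_smul_sum_right (Y.d_zero j) fun r s hr hs => by
    rw [Y.rel_df j j r s hj1 (by omega) hj1 hj2 hr hs]; simp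

theorem exchangeRel_dS_succ_f : ExchangeRel (Y.f j) 1 0 (-1) (Y.dS (j + 1)) :=
  exchangeRel_mk_of_lie_eq_smul_sum_right (Y.d_zero (j + 1)) fun r s hr hs => by
    rw [Y.rel_df (j + 1) j r s (by omega) (by omega) hj1 hj2 hr hs]; simp

theorem exchangeRel_dS_e : ExchangeRel (Y.e j) (p (j + 1) - p j + 1) 1 0 (Y.dS j) :=
  exchangeRel_mk_of_lie_eq_smul_sum_left (Y.d_zero j) fun r s hr hs => by
    rw [Y.rel_de j j r s hj1 (by omega) hj1 hj2 hr hs]; simp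

theorem exchangeRel_dS_succ_e :
    ExchangeRel (Y.e j) (p (j + 1) - p j + 1) (-1) 0 (Y.dS (j + 1)) :=
  exchangeRel_mk_of_lie_eq_smul_sum_left (Y.d_zero (j + 1)) fun r s hr hs => by
    rw [Y.rel_de (j + 1) j r s (by omega) (by omega) hj1 hj2 hr hs]; simp

end Exchange

theorem commute_coeff_aS {z : A} {i : ℕ} (h : ∀ k < i, ∀ t, Commute z (Y.d (k + 1) t)) (m : ℕ) :
    Commute z (coeff m (Y.aS i)) := by
  induction i generalizing m with
  | zero =>
    rw [aS, List.range_zero, List.map_nil, List.prod_nil, coeff_one]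
    split_ifs
    exacts [Commute.one_right z, Commute.zero_right z]
  | succ i ih =>
    rw [aS_succ]
    exact commute_coeff_mul (ih fun k hk => h k (by omega))
      (commute_coeff_shiftSeries (by simpa using h i (by omega)) _) m

/-- For `i > j = q + 1` the product `a_i(u)` contains the block `d_j(u-q) d_{j+1}(u-q-1)`, which
may commute with `z` although its two factors do not. -/
theorem commute_coeff_aS_of_ne {z : A} {q i : ℕ} (hi : i ≠ q + 1)
    (hd : ∀ k < i, k ≠ q → k ≠ q + 1 → ∀ t, Commute z (Y.d (k + 1) t))
    (hblock : ∀ t, Commute z (coeff t (shiftSeries q (Y.dS (q + 1)) *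
      shiftSeries ((q : ℤ) + 1) (Y.dS (q + 2))))) (m : ℕ) :
    Commute z (coeff m (Y.aS i)) := by
  rcases Nat.lt_or_ge i (q + 1) with hiq | hiq
  · exact Y.commute_coeff_aS (fun k hk => hd k hk (by omega) (by omega)) m
  induction i, (show q + 2 ≤ i by omega) using Nat.le_induction generalizing m with
  | base =>
    rw [aS_succ, aS_succ, mul_assoc]
    refine commute_coeff_mul (Y.commute_coeff_aS fun k hk => hd k (by omega) (by omega) (by omega))
      ?_ m
    exact_mod_cast hblock
  | succ i hqi ih =>
    rw [aS_succ]
    exact commute_coeff_mul (fun t => ih (by omega) (fun k hk => hd k (by omega)) t (by omega))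
      (commute_coeff_shiftSeries (by simpa using hd i (by omega) (by omega) (by omega)) _) m

theorem commute_f_d {j k : ℕ} (hj1 : 1 ≤ j) (hj2 : j ≤ n - 1) (hk1 : 1 ≤ k) (hkn : k ≤ n)
    (hkj : k ≠ j) (hkj' : k ≠ j + 1) (s t : ℕ) : Commute (Y.f j s) (Y.d k t) := by
  rcases Nat.eq_zero_or_pos s with rfl | hs
  · rw [Y.f_zero]; exact Commute.zero_left _
  rcases Nat.eq_zero_or_pos t with rfl | ht
  · rw [Y.d_zero]; exact Commute.one_right _
  refine (commute_iff_lie_eq.mpr ?_).symm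
  rw [Y.rel_df k j t s hk1 hkn hj1 hj2 ht hs]
  simp [hkj, hkj']

theorem commute_e_d {i k : ℕ} (hi1 : 1 ≤ i) (hi2 : i ≤ n - 1) (hk1 : 1 ≤ k) (hkn : k ≤ n)
    (hki : k ≠ i) (hki' : k ≠ i + 1) (t r : ℕ) : Commute (Y.e i t) (Y.d k r) := by
  rcases Nat.lt_or_ge t (p (i + 1) - p i + 1) with ht | ht
  · rw [Y.e_zero i t ht]; exact Commute.zero_left _
  rcases Nat.eq_zero_or_pos r with rfl | hr
  · rw [Y.d_zero]; exact Commute.one_right _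
  refine (commute_iff_lie_eq.mpr ?_).symm
  rw [Y.rel_de k i r t hk1 hkn hi1 hi2 hr ht]
  simp [hki, hki']

theorem commute_e_f {i j : ℕ} (hi1 : 1 ≤ i) (hi2 : i ≤ n - 1) (hj1 : 1 ≤ j) (hj2 : j ≤ n - 1)
    (hij : i ≠ j) (t s : ℕ) : Commute (Y.e i t) (Y.f j s) := by
  rcases Nat.lt_or_ge t (p (i + 1) - p i + 1) with ht | ht
  · rw [Y.e_zero i t ht]; exact Commute.zero_left _
  rcases Nat.eq_zero_or_pos s with rfl | hs
  · rw [Y.f_zero]; exact Commute.zero_right _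
  exact commute_iff_lie_eq.mpr <| (Y.rel_ef i j t s hi1 hi2 hj1 hj2 ht hs).trans (if_neg hij)

theorem commute_f_coeff_aS {i j : ℕ} (hin : i ≤ n) (hj1 : 1 ≤ j) (hj2 : j ≤ n - 1) (hij : i ≠ j)
    (s m : ℕ) : Commute (Y.f j s) (coeff m (Y.aS i)) := by
  rcases Nat.eq_zero_or_pos s with rfl | hs
  · rw [Y.f_zero]; exact Commute.zero_left _
  obtain ⟨q, rfl⟩ : ∃ q, j = q + 1 := ⟨j - 1, by omega⟩
  refine Y.commute_coeff_aS_of_ne hij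
    (fun k hk hkq hkq' => Y.commute_f_d hj1 hj2 (by omega) (by omega) (by omega) (by omega) s)
    (fun t => (commute_iff_lie_eq.mpr ?_).symm) m
  exact lie_coeff_shiftSeries_mul_shiftSeries_eq_zero (Y.exchangeRel_dS_f hj1 hj2)
    (by simpa using Y.exchangeRel_dS_succ_f hj1 hj2) (Y.constantCoeff_dS _)
    (Y.constantCoeff_dS _) q t s hs

theorem commute_e_coeff_aS {i j : ℕ} (hi1 : 1 ≤ i) (hi2 : i ≤ n - 1) (hjn : j ≤ n) (hij : i ≠ j)
    (t m : ℕ) : Commute (Y.e i t) (coeff m (Y.aS j)) := by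
  rcases Nat.lt_or_ge t (p (i + 1) - p i + 1) with ht | ht
  · rw [Y.e_zero i t ht]; exact Commute.zero_left _
  obtain ⟨q, rfl⟩ : ∃ q, i = q + 1 := ⟨i - 1, by omega⟩
  refine Y.commute_coeff_aS_of_ne hij.symm
    (fun k hk hkq hkq' => Y.commute_e_d hi1 hi2 (by omega) (by omega) (by omega) (by omega) t)
    (fun r => (commute_iff_lie_eq.mpr ?_).symm) m
  exact lie_coeff_shiftSeries_mul_shiftSeries_eq_zero (Y.exchangeRel_dS_e hi1 hi2)
    (by simpa using Y.exchangeRel_dS_succ_e hi1 hi2) (Y.constantCoeff_dS _)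
    (Y.constantCoeff_dS _) q r t ht

theorem commute_coeff_aS_coeff_aS (i j r s : ℕ) :
    Commute (coeff r (Y.aS i)) (coeff s (Y.aS j)) :=
  Y.commute_coeff_aS (fun k _ t => (Y.commute_coeff_aS
    (fun k' _ t' => commute_iff_lie_eq.mpr (Y.rel_dd (k + 1) (k' + 1) t t')) r).symm) s

theorem commute_coeff_aS_coeff_cS {i j : ℕ} (hin : i ≤ n) (hj1 : 1 ≤ j) (hj2 : j ≤ n - 1)
    (hij : i ≠ j) (r s : ℕ) : Commute (coeff r (Y.aS i)) (coeff s (Y.cS j)) :=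
  commute_coeff_mul
    (commute_coeff_shiftSeries
      (fun t => by simpa using (Y.commute_f_coeff_aS hin hj1 hj2 hij t r).symm) _)
    (Y.commute_coeff_aS_coeff_aS i j r) s

theorem commute_e_coeff_cS {i j : ℕ} (hi1 : 1 ≤ i) (hi2 : i ≤ n - 1) (hj1 : 1 ≤ j)
    (hj2 : j ≤ n - 1) (hij : i ≠ j) (t s : ℕ) : Commute (Y.e i t) (coeff s (Y.cS j)) :=
  commute_coeff_mul
    (commute_coeff_shiftSeries (by simpa using Y.commute_e_f hi1 hi2 hj1 hj2 hij t) _)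
    (Y.commute_e_coeff_aS hi1 hi2 (by omega) hij t) s

theorem commute_coeff_bS_coeff_cS {i j : ℕ} (hi1 : 1 ≤ i) (hi2 : i ≤ n - 1) (hj1 : 1 ≤ j)
    (hj2 : j ≤ n - 1) (hij : i ≠ j) (r s : ℕ) : Commute (coeff r (Y.bS i)) (coeff s (Y.cS j)) :=
  (commute_coeff_mul (fun t => (Y.commute_coeff_aS_coeff_cS (by omega) hj1 hj2 hij t s).symm)
    (commute_coeff_shiftSeries
      (fun t => by simpa using (Y.commute_e_coeff_cS hi1 hi2 hj1 hj2 hij t s).symm) _) r).symm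

end ShiftedYangian

open ShiftedYangian in
theorem aS_cS_commute_and_bS_cS_commute_general
    {A : Type} [Ring A] {n : ℕ} {p : ℕ → ℕ}
    (Y : ShiftedYangian A n p) :
    (∀ i j r s : ℕ, 1 ≤ i → i ≤ n → 1 ≤ j → j ≤ n - 1 → i ≠ j →
      ⁅PowerSeries.coeff (R := A) r (Y.aS i), PowerSeries.coeff (R := A) s (Y.cS j)⁆ = 0) ∧
    (∀ i j r s : ℕ, 1 ≤ i → i ≤ n - 1 → 1 ≤ j → j ≤ n - 1 → i ≠ j →
      ⁅PowerSeries.coeff (R := A) r (Y.bS i), PowerSeries.coeff (R := A) s (Y.cS j)⁆ = 0) := by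
  exact ⟨fun i j r s _ hin hj1 hj2 hij => (Y.commute_coeff_aS_coeff_cS hin hj1 hj2 hij r s).lie_eq,
    fun i j r s hi1 hi2 hj1 hj2 hij => (Y.commute_coeff_bS_coeff_cS hi1 hi2 hj1 hj2 hij r s).lie_eq⟩

open ShiftedYangian in
/-- In the shifted Yangian `Y_π(gl_n)`: `[a_i(u), c_j(v)] = 0` and `[b_i(u), c_j(v)] = 0`
for `i ≠ j`, coefficientwise. -/
theorem aS_cS_commute_and_bS_cS_commute
    {A : Type} [Ring A] {n : ℕ} {p : ℕ → ℕ}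
    (hp : ∀ k, p k ≤ p (k+1)) (Y : ShiftedYangian A n p) :
    (∀ i j r s : ℕ, 1 ≤ i → i ≤ n → 1 ≤ j → j ≤ n - 1 → i ≠ j →
      ⁅PowerSeries.coeff (R := A) r (Y.aS i), PowerSeries.coeff (R := A) s (Y.cS j)⁆ = 0) ∧
    (∀ i j r s : ℕ, 1 ≤ i → i ≤ n - 1 → 1 ≤ j → j ≤ n - 1 → i ≠ j →
      ⁅PowerSeries.coeff (R := A) r (Y.bS i), PowerSeries.coeff (R := A) s (Y.cS j)⁆ = 0) :=
  aS_cS_commute_and_bS_cS_commute_general Y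
end
end

section
/- In the shifted Yangian Y_π(gl_2) with π = (p_1, p_2), p_1 ≤ p_2, one has the identity b_1(u) = d_1(u)e_1(u) = (1 - u^{-1})^{p_2-p_1} e_1(u-1) d_1(u) of formal series in u^{-1}. -/
/-!
Write `x = u⁻¹`, `m = p₂ - p₁`, `D = d₁(u)` and `τₛ = Σₖ e₁^(s+k) xᵏ` for the tails of `e₁(u)`,
so that `τₛ = e₁^(s) + x τₛ₊₁` and, re-expanding at `u - 1`,
`(1 - x) τₛ(u-1) = (1 - x) e₁^(s) + x τₛ₊₁(u-1)`. The relation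
`[d₁^(r), e₁^(s)] = Σ_{t<r} d₁^(t) e₁^(r+s-t-1)` says `e₁^(s) D = D e₁^(s) - x D τₛ`.
Together these show that `Δₛ = τₛ(u-1) D - (1 - x) D τₛ` satisfies `(1 - x) Δₛ = x Δₛ₊₁`
for `s > m`, and comparing coefficients degree by degree forces all these `Δₛ` to vanish.
As `e₁^(s) = 0` for `s ≤ m`, `e₁(u) = x^(m+1) τ_{m+1}` and
`(1 - x)^(m+1) e₁(u-1) = x^(m+1) τ_{m+1}(u-1)`, so `Δ_{m+1} = 0` is the claim multiplied by the
unit `1 - x`.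
-/

open scoped Classical
open PowerSeries

noncomputable section

variable {A : Type} [Ring A]

namespace PowerSeries

variable {R : Type*} [Ring R]

theorem coeff_succ_one_sub_X_mul (f : R⟦X⟧) (n : ℕ) :
    coeff (n + 1) ((1 - X) * f) = coeff (n + 1) f - coeff n f := by
  rw [sub_mul, one_mul, map_sub, coeff_succ_X_mul]

theorem coeff_zero_one_sub_X_mul (f : R⟦X⟧) : coeff 0 ((1 - X) * f) = coeff 0 f := by
  simp [sub_mul]

theorem isUnit_one_sub_X : IsUnit (1 - X : R⟦X⟧) :=
  isUnit_iff_constantCoeff.mpr (by simp)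

theorem eq_zero_of_one_sub_X_mul_eq_X_mul {f : ℕ → R⟦X⟧}
    (h : ∀ s, (1 - X) * f s = X * f (s + 1)) (s : ℕ) : f s = 0 := by
  ext n
  induction n generalizing s with
  | zero => simpa [coeff_zero_one_sub_X_mul] using congrArg (coeff 0) (h s)
  | succ n ih =>
    have := congrArg (coeff (n + 1)) (h s)
    rw [coeff_succ_one_sub_X_mul, coeff_succ_X_mul, ih, ih] at this
    simpa [sub_eq_zero] using this

end PowerSeries

section tailSeries

variable {R : Type*} [Semiring R]

def tailSeries (e : ℕ → R) (s : ℕ) : R⟦X⟧ := mk fun k => e (s + k)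

@[simp]
theorem coeff_tailSeries (e : ℕ → R) (s k : ℕ) : coeff k (tailSeries e s) = e (s + k) :=
  coeff_mk _ _

theorem tailSeries_zero (e : ℕ → R) : tailSeries e 0 = mk e := by
  ext k; simp

theorem tailSeries_eq_C_add_X_mul (e : ℕ → R) (s : ℕ) :
    tailSeries e s = C (e s) + X * tailSeries e (s + 1) := by
  ext (_ | k)
  · simp
  · simp [coeff_succ_X_mul, add_right_comm s 1 k, add_assoc]

theorem X_pow_mul_tailSeries {e : ℕ → R} {s : ℕ} (he : ∀ i < s, e i = 0) :
    X ^ s * tailSeries e s = mk e := by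
  ext k
  rw [coeff_X_pow_mul', coeff_mk]
  split_ifs with hk
  · rw [coeff_tailSeries, Nat.add_sub_cancel' hk]
  · exact (he k (not_le.mp hk)).symm

end tailSeries

theorem coeff_succ_shiftSeries_one (g : A⟦X⟧) (j : ℕ) :
    coeff (j + 1) (shiftSeries 1 g) =
      ∑ i ∈ Finset.range (j + 1), (j.choose i : A) * coeff (i + 1) g := by
  rw [shiftSeries, coeff_mk, if_neg j.succ_ne_zero, ← Finset.Ico_add_one_right_eq_Icc,
    Finset.sum_Ico_eq_sum_range]
  simp [add_comm 1]

theorem one_sub_X_mul_shiftSeries_one_tailSeries (e : ℕ → A) (s : ℕ) :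
    (1 - X) * shiftSeries 1 (tailSeries e s) =
      (1 - X) * C (e s) + X * shiftSeries 1 (tailSeries e (s + 1)) := by
  ext (_ | _ | j)
  · simp [coeff_zero_one_sub_X_mul, shiftSeries]
  · simp [coeff_succ_one_sub_X_mul, shiftSeries]
    abel
  · simp only [map_add, coeff_succ_one_sub_X_mul, coeff_succ_X_mul, coeff_succ_shiftSeries_one,
      coeff_C, coeff_tailSeries]
    rw [Finset.sum_choose_succ_mul (fun i _ => e (s + (i + 1)))]
    simp [add_assoc, add_comm 1]

theorem mul_mk_eq_one_sub_X_pow_mul_shiftSeries_one_mul {D : A⟦X⟧} {e : ℕ → A} {m : ℕ}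
    (he : ∀ s ≤ m, e s = 0)
    (hcomm : ∀ s, m < s → C (e s) * D = D * C (e s) - X * (D * tailSeries e s)) :
    D * mk e = (1 - X) ^ m * shiftSeries 1 (mk e) * D := by
  have hτ : ∀ s, D * tailSeries e s = D * C (e s) + X * (D * tailSeries e (s + 1)) := fun s => by
    rw [tailSeries_eq_C_add_X_mul e s, mul_add, ← mul_assoc D X, (commute_X D).eq, mul_assoc]
  set τ := tailSeries e
  set σ := fun s => shiftSeries 1 (τ s)
  have hσ : ∀ s, (1 - X) * σ s = (1 - X) * C (e s) + X * σ (s + 1) :=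
    one_sub_X_mul_shiftSeries_one_tailSeries e
  have tail : ∀ s, m < s → σ s * D = (1 - X) * (D * τ s) := by
    intro s hs
    obtain ⟨i, rfl⟩ := Nat.exists_eq_add_of_le hs
    refine sub_eq_zero.mp (eq_zero_of_one_sub_X_mul_eq_X_mul
      (f := fun i => σ (m + 1 + i) * D - (1 - X) * (D * τ (m + 1 + i))) (fun i => ?_) i)
    have hcomm := hcomm (m + 1 + i) (by omega)
    rw [mul_sub, ← mul_assoc _ (σ _), hσ, add_mul, mul_assoc, hcomm, hτ]
    noncomm_ring
  have head : ∀ j ≤ m + 1, (1 - X) ^ j * σ 0 = X ^ j * σ j := by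
    intro j hj
    induction j with
    | zero => simp
    | succ j ih =>
      rw [pow_succ', mul_assoc, ih (by omega), ← mul_assoc, (commute_X_pow _ j).eq, mul_assoc,
        hσ, he j (by omega), map_zero, mul_zero, zero_add, ← mul_assoc, ← pow_succ]
  apply isUnit_one_sub_X.mul_left_cancel
  calc (1 - X) * (D * mk e) = (1 - X) * (D * (X ^ (m + 1) * τ (m + 1))) := by
        rw [X_pow_mul_tailSeries fun i hi => he i (by omega)]
    _ = X ^ (m + 1) * (σ (m + 1) * D) := by
        rw [tail (m + 1) (by omega), ← mul_assoc D, (commute_X_pow D _).eq, mul_assoc,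
          ← mul_assoc (1 - X), (commute_X_pow (1 - X) _).eq, mul_assoc]
    _ = (1 - X) * ((1 - X) ^ m * shiftSeries 1 (mk e) * D) := by
        rw [← mul_assoc, ← head (m + 1) le_rfl, pow_succ', ← tailSeries_zero]
        simp only [mul_assoc, σ, τ]

namespace ShiftedYangian

theorem C_e_mul_dS {n : ℕ} {p : ℕ → ℕ} (Y : ShiftedYangian A n p) {i s : ℕ} (hi : 1 ≤ i)
    (hin : i ≤ n - 1) (hs : p (i + 1) - p i < s) :
    C (Y.e i s) * Y.dS i = Y.dS i * C (Y.e i s) - X * (Y.dS i * tailSeries (Y.e i) s) := by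
  ext (_ | c)
  · simp [dS, Y.d_zero]
  have hrel := Y.rel_de i i (c + 1) s hi (by omega) hi hin c.succ_pos hs
  rw [if_pos rfl, if_neg i.succ_ne_self.symm, sub_zero, one_smul, Ring.lie_def] at hrel
  have hsum : coeff c (Y.dS i * tailSeries (Y.e i) s) =
      ∑ t ∈ Finset.range (c + 1), Y.d i t * Y.e i (c + 1 + s - 1 - t) := by
    rw [coeff_mul, Finset.Nat.sum_antidiagonal_eq_sum_range_succ_mk]
    refine Finset.sum_congr rfl fun t ht => ?_
    rw [Finset.mem_range] at ht
    rw [dS, coeff_mk, coeff_tailSeries, show s + (c - t) = c + 1 + s - 1 - t by omega]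
  rw [map_sub, coeff_succ_X_mul, hsum, ← hrel, coeff_C_mul, coeff_mul_C, dS, coeff_mk,
    sub_sub_cancel]

theorem dS_mul_eS {n : ℕ} {p : ℕ → ℕ} (Y : ShiftedYangian A n p) {i : ℕ} (hi : 1 ≤ i)
    (hin : i ≤ n - 1) :
    Y.dS i * Y.eS i = (1 - X) ^ (p (i + 1) - p i) * shiftSeries 1 (Y.eS i) * Y.dS i :=
  mul_mk_eq_one_sub_X_pow_mul_shiftSeries_one_mul
    (fun s hs => Y.e_zero i s (Nat.lt_succ_of_le hs)) fun _ hs => Y.C_e_mul_dS hi hin hs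

end ShiftedYangian

open ShiftedYangian in
theorem b1_two_expressions_gl2_general
    {A : Type} [Ring A] {p : ℕ → ℕ}
    (Y : ShiftedYangian A 2 p) :
    Y.dS 1 * Y.eS 1 =
      ((1 : PowerSeries A) - PowerSeries.X) ^ (p 2 - p 1) *
        shiftSeries 1 (Y.eS 1) * Y.dS 1 :=
  Y.dS_mul_eS le_rfl le_rfl

open ShiftedYangian in
/-- In the shifted Yangian `Y_π(gl_2)`, `π = (p_1 ≤ p_2)`:
`b_1(u) = d_1(u) e_1(u) = (1 - u⁻¹)^{p_2 - p_1} e_1(u-1) d_1(u)`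
as formal series in `u⁻¹`. -/
theorem b1_two_expressions_gl2
    {A : Type} [Ring A] {p : ℕ → ℕ} (hp : p 1 ≤ p 2)
    (Y : ShiftedYangian A 2 p) :
    Y.dS 1 * Y.eS 1 =
      ((1 : PowerSeries A) - PowerSeries.X) ^ (p 2 - p 1) *
        shiftSeries 1 (Y.eS 1) * Y.dS 1 :=
  b1_two_expressions_gl2_general Y
end
end
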